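/- Cycle-splitting lemma: let W be a cyclic binary sequence of length L ≥ 2n in which all length-n cyclic substrings are distinct, and suppose both a_1 a_2 ⋯ a_n and (1−a_1) a_2 ⋯ a_n occur as cyclic substrings of W. Then there exist cyclic sequences U and V with |U| + |V| = L, each with all length-n cyclic substrings distinct, such that the length-n cyclic substrings of W are exactly the disjoint union of those of U and V. -/

import Mathlib

/-!
Let the conjugate words start at positions `i` and `j = i + d` of `W`. They share their last
`n - 1` letters, so `W` agrees with its shift by `d` on the `n - 1` positions after `i`. Hence if
the arc of length `d` starting at `i + 1` is closed up into a cycle `U`, the windows of `U` that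
wrap around its end read the same letters as the corresponding windows of `W`: the windows of `U`
are exactly the windows of `W` starting in that arc. The same holds for the complementary arc of
length `L - d` starting at `j + 1`, giving `V`. The two arcs partition the positions of `W`, whose
windows are distinct; this gives both the disjoint union and the distinctness in `U` and `V`.
-/

/-- The set of length-`n` cyclic substrings of a cyclic sequence `C` of length `L`. -/
def cycSubs (n : ℕ) {L : ℕ} (C : ZMod L → Bool) : Set (Fin n → Bool) :=
  {f | ∃ i : ZMod L, ∀ k : Fin n, f k = C (i + (k : ℕ))}

/-- All length-`n` cyclic substrings of `C` are distinct. -/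
def AllDistinct (n : ℕ) {L : ℕ} (C : ZMod L → Bool) : Prop :=
  ∀ i j : ZMod L, (∀ k : Fin n, C (i + (k : ℕ)) = C (j + (k : ℕ))) → i = j

open Set

lemma Nat.apply_mod_eq_of_periodic_lt {α : Type*} {f : ℕ → α} {c N : ℕ}
    (hf : ∀ r, r + c < N → f (r + c) = f r) : ∀ m < N, f (m % c) = f m := by
  intro m
  induction m using Nat.strong_induction_on with
  | _ m ih =>
    intro hm
    rcases lt_or_ge m c with h | h
    · rw [Nat.mod_eq_of_lt h]
    obtain rfl | hc := c.eq_zero_or_pos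
    · rw [Nat.mod_zero]
    rw [Nat.mod_eq_sub_mod h, ih (m - c) (by omega) (by omega), ← hf (m - c) (by omega),
      Nat.sub_add_cancel h]

lemma ZMod.natCast_injOn_Iio {L : ℕ} : InjOn (Nat.cast : ℕ → ZMod L) (Iio L) :=
  fun a ha b hb h => by rw [← ZMod.val_natCast_of_lt ha, h, ZMod.val_natCast_of_lt hb]

namespace CyclicWord

variable {α : Type*} {n L : ℕ}

def window (n : ℕ) (C : ZMod L → α) (i : ZMod L) : Fin n → α :=
  fun k => C (i + (k : ℕ))

lemma cycSubs_eq_range (C : ZMod L → Bool) : cycSubs n C = range (window n C) := by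
  ext f
  simp only [cycSubs, window, mem_ofPred_eq, mem_range, funext_iff, eq_comm]

lemma allDistinct_iff_injective (C : ZMod L → Bool) :
    AllDistinct n C ↔ Function.Injective (window n C) := by
  simp only [AllDistinct, Function.Injective, window, funext_iff]

def arc (C : ZMod L → α) (x : ZMod L) (c : ℕ) : ZMod c → α :=
  fun t => C (x + (t.val : ℕ))

section arc

variable {C : ZMod L → α} {x : ZMod L} {c : ℕ}

lemma window_arc [NeZero c] (hper : ∀ r : ℕ, r + 1 < n → C (x + r) = C (x + c + r))
    (t : ZMod c) : window n (arc C x c) t = window n C (x + (t.val : ℕ)) := by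
  funext k
  have hval : (t + ((k : ℕ) : ZMod c)).val = (t.val + k) % c := by
    rw [ZMod.val_add, ZMod.val_natCast, Nat.add_mod_mod]
  have hmod := Nat.apply_mod_eq_of_periodic_lt (f := fun m : ℕ => C (x + m)) (c := c)
    (N := c + n - 1)
    (fun r hr => by simpa [add_assoc, add_comm] using (hper r (by omega)).symm)
    (t.val + k) (by have := t.val_lt; omega)
  simp only [window, arc, hval, hmod, Nat.cast_add, add_assoc]

lemma cycSubs_arc [NeZero c] {C : ZMod L → Bool}
    (hper : ∀ r : ℕ, r + 1 < n → C (x + r) = C (x + c + r)) :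
    cycSubs n (arc C x c) = window n C '' ((fun t : ℕ => x + t) '' Iio c) := by
  have hval : range (ZMod.val : ZMod c → ℕ) = Iio c :=
    Subset.antisymm (range_subset_iff.mpr ZMod.val_lt)
      fun m hm => ⟨m, ZMod.val_natCast_of_lt hm⟩
  rw [cycSubs_eq_range, ← hval, ← range_comp, ← range_comp]
  exact congrArg range (funext (window_arc hper))

lemma allDistinct_arc [NeZero c] {C : ZMod L → Bool} (hC : AllDistinct n C) (hcL : c ≤ L)
    (hper : ∀ r : ℕ, r + 1 < n → C (x + r) = C (x + c + r)) : AllDistinct n (arc C x c) := by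
  rw [allDistinct_iff_injective] at hC ⊢
  intro s t hst
  rw [window_arc hper, window_arc hper] at hst
  have hL : ∀ u : ZMod c, u.val ∈ Iio L := fun u => lt_of_lt_of_le u.val_lt hcL
  exact ZMod.val_injective c (ZMod.natCast_injOn_Iio (hL s) (hL t) (add_left_cancel (hC hst)))

end arc

lemma arcs_partition [NeZero L] (x : ZMod L) {d e : ℕ} (hde : d + e = L) :
    (fun t : ℕ => x + t) '' Iio d ∪ (fun t : ℕ => x + d + t) '' Iio e = univ ∧
      Disjoint ((fun t : ℕ => x + t) '' Iio d) ((fun t : ℕ => x + d + t) '' Iio e) := by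
  constructor
  · refine eq_univ_of_forall fun p => ?_
    obtain ⟨m, hm, rfl⟩ : ∃ m < L, x + (m : ZMod L) = p :=
      ⟨(p - x).val, (p - x).val_lt, by rw [ZMod.natCast_zmod_val]; ring⟩
    rcases lt_or_ge m d with h | h
    · exact Or.inl ⟨m, h, rfl⟩
    · refine Or.inr ⟨m - d, by simp only [mem_Iio]; omega, ?_⟩
      simp only [Nat.cast_sub h]
      ring
  · rw [disjoint_left]
    rintro _ ⟨r, hr, rfl⟩ ⟨s, hs, hrs⟩
    simp only [mem_Iio] at hr hs
    have hcast : ((d + s : ℕ) : ZMod L) = r := by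
      push_cast
      exact add_left_cancel ((add_assoc _ _ _).symm.trans hrs)
    have := ZMod.natCast_injOn_Iio (mem_Iio.mpr (by omega)) (mem_Iio.mpr (by omega)) hcast
    omega

lemma ne_and_tail_agree_of_conjugate {C : ZMod L → Bool} {a : Fin n → Bool} (hn : 0 < n)
    {i j : ZMod L} (hi : ∀ k : Fin n, a k = C (i + (k : ℕ)))
    (hj : ∀ k : Fin n, Function.update a ⟨0, hn⟩ (!a ⟨0, hn⟩) k = C (j + (k : ℕ))) :
    i ≠ j ∧ ∀ r : ℕ, r + 1 < n → C (i + 1 + r) = C (j + 1 + r) := by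
  constructor
  · rintro rfl
    have h0 := hj ⟨0, hn⟩
    rw [Function.update_self, ← hi] at h0
    exact Bool.not_ne_self _ h0
  · intro r hr
    have hshift : ∀ y : ZMod L, y + 1 + r = y + ((r + 1 : ℕ) : ZMod L) := fun y => by
      push_cast; ring
    have hj' := hj ⟨r + 1, hr⟩
    rw [Function.update_of_ne (by simp [Fin.ext_iff])] at hj'
    rw [hshift, hshift, ← hi ⟨r + 1, hr⟩, hj']

end CyclicWord

open CyclicWord in
theorem cycle_splitting (n L : ℕ) (hn : 0 < n) (hL : 2 * n ≤ L)
    (W : ZMod L → Bool) (hWdist : AllDistinct n W)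
    (a : Fin n → Bool) (haW : a ∈ cycSubs n W)
    (haW' : Function.update a ⟨0, hn⟩ (!a ⟨0, hn⟩) ∈ cycSubs n W) :
    ∃ (LU LV : ℕ) (U : ZMod LU → Bool) (V : ZMod LV → Bool),
      LU + LV = L ∧ AllDistinct n U ∧ AllDistinct n V ∧
      cycSubs n W = cycSubs n U ∪ cycSubs n V ∧
      Disjoint (cycSubs n U) (cycSubs n V) := by
  have : NeZero L := ⟨by omega⟩
  obtain ⟨i, hi⟩ := haW
  obtain ⟨j, hj⟩ := haW'
  obtain ⟨hij, hagree⟩ := ne_and_tail_agree_of_conjugate hn hi hj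
  set d := (j - i).val
  have hdL : d < L := (j - i).val_lt
  have hd : i + d = j := by rw [ZMod.natCast_zmod_val]; ring
  have he : j + ((L - d : ℕ) : ZMod L) = i := by
    rw [Nat.cast_sub hdL.le, ZMod.natCast_self, ← hd]; ring
  have : NeZero d := ⟨fun h0 => hij (by simpa [h0] using hd)⟩
  have : NeZero (L - d) := ⟨by omega⟩
  have hperU : ∀ r : ℕ, r + 1 < n → W (i + 1 + r) = W (i + 1 + d + r) := by
    rwa [add_right_comm, hd]
  have hperV : ∀ r : ℕ, r + 1 < n → W (j + 1 + r) = W (j + 1 + (L - d : ℕ) + r) := by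
    rw [add_right_comm, he]
    exact fun r hr => (hagree r hr).symm
  obtain ⟨hcover, hdisj⟩ := arcs_partition (i + 1) (Nat.add_sub_cancel' hdL.le)
  rw [add_right_comm, hd] at hcover hdisj
  refine ⟨d, L - d, arc W (i + 1) d, arc W (j + 1) (L - d), by omega,
    allDistinct_arc hWdist hdL.le hperU, allDistinct_arc hWdist (by omega) hperV, ?_, ?_⟩
  · rw [cycSubs_arc hperU, cycSubs_arc hperV, ← image_union, hcover, image_univ,
      cycSubs_eq_range]
  · rw [cycSubs_arc hperU, cycSubs_arc hperV]
    exact (disjoint_image_iff ((allDistinct_iff_injective W).mp hWdist)).mpr hdisj
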